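/- For every x in the open interval (0, 1/2), the values h_e(x) ≤ x and h_o(x) ≤ x hold, where h_e and h_o are the digit-transfer maps from binary expansions of [0,1/2] into the Cantor set defined in the context. -/

import Mathlib

/-!
For `x ≤ 1/4` the only nonzero ternary digits of `h_e(x)` are the `2`s at positions `2j`,
`j ≥ 2`, with binary digit `β_j = 1`, and `2 · 3^(-2j-2) ≤ 2^(-j)`; so `h_e(x)` is dominated
termwise by the binary expansion of `x`. Since `γᵒ_(i+1) = γᵉ_i`, moreover `h_o(x) = h_e(x)/3`
there. For `x > 1/4` both maps are at most `∑ 2 · 3^(-i-2) = 1/9 < x`.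
-/

/-- The `i`-th binary digit (`i ≥ 1`) of `x ∈ [0, 1/2]`, using the terminating
binary expansion when `x ≤ 1/4` and the non-terminating one when `x > 1/4`. -/
noncomputable def binDigit (x : ℝ) (i : ℕ) : ℤ :=
  if x ≤ 1 / 4 then ⌊x * 2 ^ i⌋ - 2 * ⌊x * 2 ^ (i - 1)⌋
  else ⌈x * 2 ^ i⌉ - 2 * ⌈x * 2 ^ (i - 1)⌉ + 1

open Classical in
/-- The ternary digits `γ_i` used in the even digit-transfer map `h_e`. -/
noncomputable def gammaE (x : ℝ) (i : ℕ) : ℝ :=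
  if x ≤ 1 / 4 then
    (if ∃ j : ℕ, 2 ≤ j ∧ i = 2 * j ∧ binDigit x j = 1 then 2 else 0)
  else
    (if ∃ j : ℕ, 2 ≤ j ∧ i = 2 * j ∧ binDigit x j = 0 then 0 else 2)

open Classical in
/-- The ternary digits `γ_i` used in the odd digit-transfer map `h_o`. -/
noncomputable def gammaO (x : ℝ) (i : ℕ) : ℝ :=
  if x ≤ 1 / 4 then
    (if ∃ j : ℕ, 2 ≤ j ∧ i = 2 * j + 1 ∧ binDigit x j = 1 then 2 else 0)
  else
    (if ∃ j : ℕ, 2 ≤ j ∧ i = 2 * j + 1 ∧ binDigit x j = 0 then 0 else 2)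

/-- The even digit-transfer map `h_e(x) = ∑_{i≥1} γ_i 3^{-i-2}` into the Cantor set. -/
noncomputable def hE (x : ℝ) : ℝ := ∑' i : ℕ, gammaE x (i + 1) / 3 ^ (i + 3)

/-- The odd digit-transfer map `h_o(x) = ∑_{i≥1} γ_i 3^{-i-2}` into the Cantor set. -/
noncomputable def hO (x : ℝ) : ℝ := ∑' i : ℕ, gammaO x (i + 1) / 3 ^ (i + 3)


lemma hasSum_two_div_three_pow : HasSum (fun i : ℕ => (2 : ℝ) / 3 ^ (i + 3)) (1 / 9) := by
  have h := (hasSum_geometric_of_lt_one (r := (1 / 3 : ℝ)) (by norm_num) (by norm_num)).mul_left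
    (2 / 27)
  have hterm : (fun i : ℕ => (2 : ℝ) / 3 ^ (i + 3)) = fun i => 2 / 27 * (1 / 3) ^ i := by
    ext i; rw [pow_add, one_div_pow]; ring
  rw [hterm, show (1 / 9 : ℝ) = 2 / 27 * (1 - 1 / 3)⁻¹ by norm_num]
  exact h

lemma summable_div_three_pow {γ : ℕ → ℝ} (h0 : ∀ i, 0 ≤ γ i) (h2 : ∀ i, γ i ≤ 2) :
    Summable fun i => γ i / 3 ^ (i + 3) :=
  hasSum_two_div_three_pow.summable.of_nonneg_of_le (fun i => div_nonneg (h0 i) (by positivity))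
    fun i => div_le_div_of_nonneg_right (h2 i) (by positivity)

lemma tsum_div_three_pow_le {γ : ℕ → ℝ} (h0 : ∀ i, 0 ≤ γ i) (h2 : ∀ i, γ i ≤ 2) :
    ∑' i, γ i / 3 ^ (i + 3) ≤ 1 / 9 :=
  hasSum_two_div_three_pow.tsum_eq ▸ (summable_div_three_pow h0 h2).tsum_le_tsum
    (fun i => div_le_div_of_nonneg_right (h2 i) (by positivity)) hasSum_two_div_three_pow.summable

lemma floor_two_mul_sub_two_mul_floor {y : ℝ} (hy : 0 ≤ y) :
    ⌊2 * y⌋ - 2 * ⌊y⌋ = ((⌊2 * y⌋₊ % 2 : ℕ) : ℤ) := by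
  have hhalf : ⌊y⌋₊ = ⌊2 * y⌋₊ / 2 := by
    rw [← Nat.floor_div_natCast]; norm_num
  rw [← Int.natCast_floor_eq_floor hy, ← Int.natCast_floor_eq_floor (by positivity), hhalf]
  omega

lemma binDigit_succ_eq_digits {x : ℝ} (h0 : 0 ≤ x) (h1 : x ≤ 1 / 4) (k : ℕ) :
    binDigit x (k + 1) = (Real.digits x 2 k : ℕ) := by
  rw [binDigit, if_pos h1, Nat.add_sub_cancel, pow_succ', mul_left_comm,
    floor_two_mul_sub_two_mul_floor (by positivity)]
  simp [Real.digits, mul_left_comm, pow_succ']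

lemma gammaE_nonneg (x : ℝ) (i : ℕ) : 0 ≤ gammaE x i := by
  unfold gammaE; split_ifs <;> norm_num

lemma gammaE_le_two (x : ℝ) (i : ℕ) : gammaE x i ≤ 2 := by
  unfold gammaE; split_ifs <;> norm_num

lemma gammaO_succ (x : ℝ) (i : ℕ) : gammaO x (i + 1) = gammaE x i := by
  unfold gammaO gammaE
  congr! 3 <;> simp

lemma exists_binDigit_eq_one_of_gammaE_ne_zero {x : ℝ} (h1 : x ≤ 1 / 4) {i : ℕ}
    (h : gammaE x i ≠ 0) : ∃ j, 2 ≤ j ∧ i = 2 * j ∧ binDigit x j = 1 := by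
  rw [gammaE, if_pos h1] at h
  split_ifs at h with hj
  · exact hj
  · exact absurd rfl h

lemma gammaE_div_le_ofDigitsTerm {x : ℝ} (h0 : 0 ≤ x) (h1 : x ≤ 1 / 4) (k : ℕ) :
    gammaE x (2 * k + 2) / 3 ^ (2 * k + 4) ≤ Real.ofDigitsTerm (Real.digits x 2) k := by
  by_cases hγ : gammaE x (2 * k + 2) = 0
  · rw [hγ, zero_div]; exact Real.ofDigitsTerm_nonneg
  obtain ⟨j, -, hj, hdigit⟩ := exists_binDigit_eq_one_of_gammaE_ne_zero h1 hγ
  obtain rfl : j = k + 1 := by omega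
  have hd : (Real.digits x 2 k : ℕ) = 1 := by
    exact_mod_cast (binDigit_succ_eq_digits h0 h1 k).symm.trans hdigit
  have hpow : (2 : ℝ) * 2 ^ (k + 1) ≤ 3 ^ (2 * k + 4) :=
    calc (2 : ℝ) * 2 ^ (k + 1) = 2 ^ (k + 2) := by ring
      _ ≤ 3 ^ (k + 2) := by gcongr; norm_num
      _ ≤ 3 ^ (2 * k + 4) := pow_le_pow_right₀ (by norm_num) (by omega)
  rw [Real.ofDigitsTerm, hd, Nat.cast_one, one_mul, Nat.cast_ofNat, ← one_div,
    div_le_div_iff₀ (by positivity) (by positivity)]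
  calc gammaE x (2 * k + 2) * 2 ^ (k + 1) ≤ 2 * 2 ^ (k + 1) := by
        gcongr; exact gammaE_le_two x _
    _ ≤ 3 ^ (2 * k + 4) := hpow
    _ = 1 * 3 ^ (2 * k + 4) := (one_mul _).symm

lemma hE_le_self {x : ℝ} (h0 : 0 ≤ x) (h1 : x ≤ 1 / 4) : hE x ≤ x := by
  have hsupp : Function.support (fun i => gammaE x (i + 1) / 3 ^ (i + 3))
      ⊆ Set.range fun k => 2 * k + 1 := by
    intro i hi
    obtain ⟨j, -, hj, -⟩ := exists_binDigit_eq_one_of_gammaE_ne_zero h1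
      (div_ne_zero_iff.mp (Function.mem_support.mp hi)).1
    exact ⟨j - 1, show 2 * (j - 1) + 1 = i by omega⟩
  have hinj : Function.Injective fun k : ℕ => 2 * k + 1 := fun a b h => by simp_all
  rw [hE, ← hinj.tsum_eq hsupp]
  calc ∑' k, gammaE x (2 * k + 2) / 3 ^ (2 * k + 4)
      ≤ ∑' k, Real.ofDigitsTerm (Real.digits x 2) k :=
        Summable.tsum_le_tsum (gammaE_div_le_ofDigitsTerm h0 h1)
          ((summable_div_three_pow (fun i => gammaE_nonneg x (i + 1))
            fun i => gammaE_le_two x (i + 1)).comp_injective hinj)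
          Real.summable_ofDigitsTerm
    _ = x := Real.ofDigits_digits one_lt_two ⟨h0, by linarith⟩

lemma hE_nonneg (x : ℝ) : 0 ≤ hE x :=
  tsum_nonneg fun i => div_nonneg (gammaE_nonneg x _) (by positivity)

lemma hE_le_ninth (x : ℝ) : hE x ≤ 1 / 9 :=
  tsum_div_three_pow_le (fun i => gammaE_nonneg x (i + 1)) fun i => gammaE_le_two x (i + 1)

lemma hO_eq_tsum_gammaE (x : ℝ) : hO x = ∑' i, gammaE x i / 3 ^ (i + 3) := by
  simp only [hO, gammaO_succ]

lemma hO_le_ninth (x : ℝ) : hO x ≤ 1 / 9 :=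
  hO_eq_tsum_gammaE x ▸ tsum_div_three_pow_le (gammaE_nonneg x) (gammaE_le_two x)

lemma hO_eq_add_hE_div_three (x : ℝ) : hO x = gammaE x 0 / 27 + hE x / 3 := by
  rw [hO_eq_tsum_gammaE,
    (summable_div_three_pow (gammaE_nonneg x) (gammaE_le_two x)).tsum_eq_zero_add, hE,
    ← tsum_div_const]
  congr 1
  · norm_num
  · congr 1; ext i; ring

lemma gammaE_zero_eq_zero {x : ℝ} (h1 : x ≤ 1 / 4) : gammaE x 0 = 0 := by
  by_contra h
  obtain ⟨j, hj2, hj0, -⟩ := exists_binDigit_eq_one_of_gammaE_ne_zero h1 h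
  omega

theorem hE_hO_le (x : ℝ) (hx : x ∈ Set.Ioo (0 : ℝ) (1 / 2)) : hE x ≤ x ∧ hO x ≤ x := by
  obtain ⟨hx0, -⟩ := hx
  by_cases h1 : x ≤ 1 / 4
  · have hE_le := hE_le_self hx0.le h1
    rw [hO_eq_add_hE_div_three, gammaE_zero_eq_zero h1]
    exact ⟨hE_le, by linarith [hE_nonneg x]⟩
  · constructor <;> linarith [hE_le_ninth x, hO_le_ninth x]
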